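/- Let (A,μ,α,β) be a BiHom-Jordan algebra and (V,φ,ψ) a BiHom-Jordan A-bimodule with structure maps ρ_l and ρ_r. Then the direct sum A⊕V, equipped with the multiplication μ̃((a,m),(b,n)) = (μ(a,b), ρ_l(a,n)+ρ_r(m,b)) and the linear maps α̃(a,m) = (α(a),φ(m)) and β̃(a,m) = (β(a),ψ(m)), is a BiHom-Jordan algebra (the split null extension of A by V). -/
import Mathlib


open TensorProduct

/-- A two-argument map is `K`-bilinear. -/
def IsBilin (K : Type*) {M N P : Type*} [Field K]
    [AddCommGroup M] [Module K M] [AddCommGroup N] [Module K N]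
    [AddCommGroup P] [Module K P] (f : M → N → P) : Prop :=
  (∀ m, IsLinearMap K (f m)) ∧ (∀ n, IsLinearMap K (fun m => f m n))

/-- The BiHom-associator of a BiHom-algebra. -/
def biHomAssoc {A : Type*} [AddCommGroup A]
    (μ : A → A → A) (α β : A → A) (x y z : A) : A :=
  μ (μ x y) (β z) - μ (α x) (μ y z)

/-- BiHom-alternative algebra: multiplicative BiHom-algebra satisfying the left and
right BiHom-alternative identities. -/
def IsBiHomAlternative (K : Type*) {A : Type*} [Field K]
    [AddCommGroup A] [Module K A]
    (μ : A → A → A) (α β : A → A) : Prop :=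
  IsBilin K μ ∧ IsLinearMap K α ∧ IsLinearMap K β ∧
  (∀ x, α (β x) = β (α x)) ∧
  (∀ x y, α (μ x y) = μ (α x) (α y)) ∧
  (∀ x y, β (μ x y) = μ (β x) (β y)) ∧
  (∀ x y z, biHomAssoc μ α β (β x) (α y) z + biHomAssoc μ α β (β y) (α x) z = 0) ∧
  (∀ x y z, biHomAssoc μ α β x (β y) (α z) + biHomAssoc μ α β x (β z) (α y) = 0)

/-- BiHom-associative algebra. -/
def IsBiHomAssociative (K : Type*) {A : Type*} [Field K]
    [AddCommGroup A] [Module K A]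
    (μ : A → A → A) (α β : A → A) : Prop :=
  IsBilin K μ ∧ IsLinearMap K α ∧ IsLinearMap K β ∧
  (∀ x, α (β x) = β (α x)) ∧
  (∀ x y, α (μ x y) = μ (α x) (α y)) ∧
  (∀ x y, β (μ x y) = μ (β x) (β y)) ∧
  (∀ x y z, biHomAssoc μ α β x y z = 0)

/-- BiHom-Jordan algebra: multiplicative, BiHom-commutative and satisfying the
BiHom-Jordan identity. -/
def IsBiHomJordan (K : Type*) {A : Type*} [Field K]
    [AddCommGroup A] [Module K A]
    (μ : A → A → A) (α β : A → A) : Prop :=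
  IsBilin K μ ∧ IsLinearMap K α ∧ IsLinearMap K β ∧
  (∀ x, α (β x) = β (α x)) ∧
  (∀ x y, α (μ x y) = μ (α x) (α y)) ∧
  (∀ x y, β (μ x y) = μ (β x) (β y)) ∧
  (∀ x y, μ (β x) (α y) = μ (β y) (α x)) ∧
  (∀ x y, biHomAssoc μ α β (μ (β (β x)) (α (β x))) (α (α (β y))) (α (α (α x))) = 0)

/-- Module BiHom-associator, arguments (v, x, y) with v ∈ V, x, y ∈ A. -/
def asVr {A V : Type*} [AddCommGroup A] [AddCommGroup V]
    (μ : A → A → A) (β : A → A) (φ : V → V) (ρr : V → A → V)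
    (v : V) (x y : A) : V :=
  ρr (ρr v x) (β y) - ρr (φ v) (μ x y)

/-- Module BiHom-associator, arguments (x, v, y) with x, y ∈ A, v ∈ V. -/
def asVm {A V : Type*} [AddCommGroup A] [AddCommGroup V]
    (α β : A → A) (ρl : A → V → V) (ρr : V → A → V)
    (x : A) (v : V) (y : A) : V :=
  ρr (ρl x v) (β y) - ρl (α x) (ρr v y)

/-- Module BiHom-associator, arguments (x, y, v) with x, y ∈ A, v ∈ V. -/
def asVl {A V : Type*} [AddCommGroup A] [AddCommGroup V]
    (μ : A → A → A) (α : A → A) (ψ : V → V) (ρl : A → V → V)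
    (x y : A) (v : V) : V :=
  ρl (μ x y) (ψ v) - ρl (α x) (ρl y v)

/-- (V, φ, ψ) together with ρl, ρr is an A-bimodule in the BiHom-module sense:
the structure maps are bilinear morphisms of BiHom-modules. -/
def AreBiHomStructureMaps (K : Type*) {A V : Type*} [Field K]
    [AddCommGroup A] [Module K A] [AddCommGroup V] [Module K V]
    (α β : A → A) (φ ψ : V → V) (ρl : A → V → V) (ρr : V → A → V) : Prop :=
  IsBilin K ρl ∧ IsBilin K ρr ∧ IsLinearMap K φ ∧ IsLinearMap K ψ ∧
  (∀ v, φ (ψ v) = ψ (φ v)) ∧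
  (∀ x v, φ (ρl x v) = ρl (α x) (φ v)) ∧
  (∀ x v, ψ (ρl x v) = ρl (β x) (ψ v)) ∧
  (∀ v x, φ (ρr v x) = ρr (φ v) (α x)) ∧
  (∀ v x, ψ (ρr v x) = ρr (ψ v) (β x))

/-- BiHom-alternative bimodule over a BiHom-alternative algebra. -/
def IsBiHomAlternativeBimodule (K : Type*) {A V : Type*} [Field K]
    [AddCommGroup A] [Module K A] [AddCommGroup V] [Module K V]
    (μ : A → A → A) (α β : A → A) (φ ψ : V → V)
    (ρl : A → V → V) (ρr : V → A → V) : Prop :=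
  AreBiHomStructureMaps K α β φ ψ ρl ρr ∧
  (∀ x v, asVl μ α ψ ρl (β x) (α x) v = 0) ∧
  (∀ x v, asVr μ β φ ρr v (β x) (α x) = 0) ∧
  (∀ x y v, asVm α β ρl ρr (β x) (φ v) y = - asVr μ β φ ρr (ψ v) (α x) y) ∧
  (∀ x y v, asVl μ α ψ ρl y (β x) (φ v) = - asVm α β ρl ρr y (ψ v) (α x))

/-- BiHom-Jordan bimodule over a BiHom-Jordan algebra. -/
def IsBiHomJordanBimodule (K : Type*) {A V : Type*} [Field K]
    [AddCommGroup A] [Module K A] [AddCommGroup V] [Module K V]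
    (μ : A → A → A) (α β : A → A) (φ ψ : V → V)
    (ρl : A → V → V) (ρr : V → A → V) : Prop :=
  AreBiHomStructureMaps K α β φ ψ ρl ρr ∧
  (∀ x v, ρl (β x) (φ v) = ρr (ψ v) (α x)) ∧
  (∀ x y z v,
    asVm α β ρl ρr (μ (β (β x)) (α (β y))) (φ (φ (ψ v))) (α (α (α z)))
    + asVm α β ρl ρr (μ (β (β y)) (α (β z))) (φ (φ (ψ v))) (α (α (α x)))
    + asVm α β ρl ρr (μ (β (β z)) (α (β x))) (φ (φ (ψ v))) (α (α (α y))) = 0) ∧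
  (∀ x y z v,
    asVr μ β φ ρr (ρr (ψ (ψ v)) (β (α x))) (β (α (α y))) (α (α (α z)))
    + asVr μ β φ ρr (ρr (ψ (ψ v)) (β (α z))) (β (α (α y))) (α (α (α x)))
    + asVl μ α ψ ρl (μ (β (β x)) (β (α z))) (β (α (α y))) (φ (φ (φ v))) = 0)

/-- Right BiHom-Jordan module. -/
def IsRightBiHomJordanModule (K : Type*) {A V : Type*} [Field K]
    [AddCommGroup A] [Module K A] [AddCommGroup V] [Module K V]
    (μ : A → A → A) (α β : A → A) (φ ψ : V → V) (ρr : V → A → V) : Prop :=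
  IsBilin K ρr ∧
  (∀ v x, φ (ρr v x) = ρr (φ v) (α x)) ∧
  (∀ v x, ψ (ρr v x) = ρr (ψ v) (β x)) ∧
  (∀ x y z v,
    (ρr (ρr (φ (ψ (ψ v))) (μ (α (β x)) (α (α y)))) (β (α (α (α z))))
      - ρr (ρr (φ (ψ (ψ v))) (β (α (α z)))) (μ (α (α (β x))) (α (α (α y)))))
    + (ρr (ρr (φ (ψ (ψ v))) (μ (α (β y)) (α (α z)))) (β (α (α (α x))))
      - ρr (ρr (φ (ψ (ψ v))) (β (α (α x)))) (μ (α (α (β y))) (α (α (α z)))))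
    + (ρr (ρr (φ (ψ (ψ v))) (μ (α (β z)) (α (α x)))) (β (α (α (α y))))
      - ρr (ρr (φ (ψ (ψ v))) (β (α (α y)))) (μ (α (α (β z))) (α (α (α x))))) = 0) ∧
  (∀ x y z v,
    ρr (ρr (ρr (ψ (ψ v)) (β (α x))) (β (α (α y)))) (β (α (α (α z))))
    + ρr (ρr (ρr (ψ (ψ v)) (β (α z))) (β (α (α y)))) (β (α (α (α x))))
    + ρr (φ (φ (ψ (ψ v)))) (μ (μ (β (α x)) (α (α z))) (α (α (α y))))
    = ρr (ρr (φ (ψ (ψ v))) (β (α (α x)))) (μ (β (α (α y))) (α (α (α z))))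
    + ρr (ρr (φ (ψ (ψ v))) (β (α (α z)))) (μ (β (α (α y))) (α (α (α x))))
    + ρr (ρr (φ (ψ (ψ v))) (β (α (α y)))) (μ (α (α (β x))) (α (α (α z)))))

/-- Left BiHom-Jordan module (with a chosen inverse `ψinv` of `ψ`). -/
def IsLeftBiHomJordanModule (K : Type*) {A V : Type*} [Field K]
    [AddCommGroup A] [Module K A] [AddCommGroup V] [Module K V]
    (μ : A → A → A) (α β : A → A) (φ ψ ψinv : V → V) (ρl : A → V → V) : Prop :=
  IsBilin K ρl ∧
  (∀ x v, φ (ρl x v) = ρl (α x) (φ v)) ∧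
  (∀ x v, ψ (ρl x v) = ρl (β x) (ψ v)) ∧
  (∀ v, ψ (ψinv v) = v) ∧ (∀ v, ψinv (ψ v) = v) ∧
  (∀ x y z v,
    (ρl (β (β (α (α z)))) (ρl (μ (α (β x)) (α (α y))) (φ (φ (φ v))))
      - ρl (μ (α (β (β x))) (α (α (β y)))) (ρl (β (α (α z))) (φ (φ (φ v)))))
    + (ρl (β (β (α (α x)))) (ρl (μ (α (β y)) (α (α z))) (φ (φ (φ v))))
      - ρl (μ (α (β (β y))) (α (α (β z)))) (ρl (β (α (α x))) (φ (φ (φ v)))))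
    + (ρl (β (β (α (α y)))) (ρl (μ (α (β z)) (α (α x))) (φ (φ (φ v))))
      - ρl (μ (α (β (β z))) (α (α (β x)))) (ρl (β (α (α y))) (φ (φ (φ v))))) = 0) ∧
  (∀ x y z v,
    ρl (β (β (α (α z)))) (ρl (β (α (α y))) (ρl (α (α x)) (ψinv (φ (φ (φ v))))))
    + ρl (β (β (α (α x)))) (ρl (β (α (α y))) (ρl (α (α z)) (ψinv (φ (φ (φ v))))))
    + ρl (μ (μ (β (β x)) (β (α z))) (β (α (α y)))) (φ (φ (φ (ψ v))))
    = ρl (μ (β (β (α y))) (β (α (α z)))) (ρl (β (α (α x))) (φ (φ (φ v))))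
    + ρl (μ (β (β (α y))) (β (α (α x)))) (ρl (β (α (α z))) (φ (φ (φ v))))
    + ρl (μ (β (β (α x))) (β (α (α z)))) (ρl (β (α (α y))) (φ (φ (φ v)))))

/-- Right special BiHom-Jordan module. -/
def IsRightSpecialBiHomJordanModule (K : Type*) {A V : Type*} [Field K]
    [AddCommGroup A] [Module K A] [AddCommGroup V] [Module K V]
    (μ : A → A → A) (α β : A → A) (φ ψ : V → V) (ρr : V → A → V) : Prop :=
  IsBilin K ρr ∧
  (∀ v x, φ (ρr v x) = ρr (φ v) (α x)) ∧
  (∀ v x, ψ (ρr v x) = ρr (ψ v) (β x)) ∧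
  (∀ x y v, ρr (φ v) (μ (β x) (α y))
      = ρr (ρr v (β x)) (β (α y)) + ρr (ρr v (β y)) (α (β x)))

/-- Left special BiHom-Jordan module. -/
def IsLeftSpecialBiHomJordanModule (K : Type*) {A V : Type*} [Field K]
    [AddCommGroup A] [Module K A] [AddCommGroup V] [Module K V]
    (μ : A → A → A) (α β : A → A) (φ ψ : V → V) (ρl : A → V → V) : Prop :=
  IsBilin K ρl ∧
  (∀ x v, φ (ρl x v) = ρl (α x) (φ v)) ∧
  (∀ x v, ψ (ρl x v) = ρl (β x) (ψ v)) ∧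
  (∀ x y v, ρl (μ (β x) (α y)) (ψ v)
      = ρl (β (α x)) (ρl (α y) v) + ρl (β (α y)) (ρl (α x) v))

/-- the split null extension A ⊕ V of a BiHom-Jordan algebra A by a
BiHom-Jordan A-bimodule V is a BiHom-Jordan algebra. -/
theorem splitNullExtension_isBiHomJordan
    (K : Type*) [Field K] [CharZero K]
    {A V : Type*} [AddCommGroup A] [Module K A] [AddCommGroup V] [Module K V]
    (μ : A → A → A) (α β : A → A)
    (hJ : IsBiHomJordan K μ α β)
    (φ ψ : V → V) (ρl : A → V → V) (ρr : V → A → V)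
    (hmod : IsBiHomJordanBimodule K μ α β φ ψ ρl ρr) :
    IsBiHomJordan K
      (fun p q : A × V => (μ p.1 q.1, ρl p.1 q.2 + ρr p.2 q.1))
      (fun p : A × V => (α p.1, φ p.2))
      (fun p : A × V => (β p.1, ψ p.2)) := by
  obtain ⟨hμbil, hα, hβ, hαβ, hαμ, hβμ, hcomm, hJid⟩ := hJ
  obtain ⟨⟨hρl, hρr, hφ, hψ, hφψ, hφρl, hψρl, hφρr, hψρr⟩, hlr, hax2, hax3⟩ := hmod
  -- handy rewrites
  have hw : ∀ x v, ρl (β (β x)) (ψ (φ v)) = ρr (ψ (ψ v)) (β (α x)) := by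
    intro x v
    have h := hlr (β x) (ψ v)
    rw [hφψ, hαβ] at h
    exact h
  refine ⟨⟨?_, ?_⟩, ?_, ?_, ?_, ?_, ?_, ?_, ?_⟩
  · intro p
    constructor
    · intro q r
      simp only [Prod.fst_add, Prod.snd_add, Prod.mk_add_mk, Prod.mk.injEq]
      exact ⟨(hμbil.1 p.1).map_add _ _, by
        rw [(hρl.1 p.1).map_add, (hρr.1 p.2).map_add]; abel⟩
    · intro c q
      simp only [Prod.smul_fst, Prod.smul_snd, Prod.smul_mk, Prod.mk.injEq]
      exact ⟨(hμbil.1 p.1).map_smul _ _, by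
        rw [(hρl.1 p.1).map_smul, (hρr.1 p.2).map_smul, smul_add]⟩
  · intro q
    constructor
    · intro p r
      simp only [Prod.fst_add, Prod.snd_add, Prod.mk_add_mk, Prod.mk.injEq]
      exact ⟨(hμbil.2 q.1).map_add _ _, by
        rw [(hρl.2 q.2).map_add, (hρr.2 q.1).map_add]; abel⟩
    · intro c p
      simp only [Prod.smul_fst, Prod.smul_snd, Prod.smul_mk, Prod.mk.injEq]
      exact ⟨(hμbil.2 q.1).map_smul _ _, by
        rw [(hρl.2 q.2).map_smul, (hρr.2 q.1).map_smul, smul_add]⟩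
  · exact ⟨fun p r => by simp [Prod.ext_iff, hα.map_add, hφ.map_add],
      fun c p => by simp [Prod.ext_iff, hα.map_smul, hφ.map_smul]⟩
  · exact ⟨fun p r => by simp [Prod.ext_iff, hβ.map_add, hψ.map_add],
      fun c p => by simp [Prod.ext_iff, hβ.map_smul, hψ.map_smul]⟩
  · intro p
    simp [Prod.ext_iff, hαβ, hφψ]
  · intro p q
    simp [Prod.ext_iff, hαμ, hφ.map_add, hφρl, hφρr]
  · intro p q
    simp [Prod.ext_iff, hβμ, hψ.map_add, hψρl, hψρr]
  · intro p q
    simp only [Prod.mk.injEq]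
    exact ⟨hcomm p.1 q.1, by rw [hlr, hlr]; abel⟩
  · rintro ⟨a, m⟩ ⟨b, n⟩
    have key := hax3 a b a m
    have hn : asVm α β ρl ρr (μ (β (β a)) (α (β a))) (φ (φ (ψ n))) (α (α (α a))) = 0 := by
      have h3 := hax2 a a a n
      set t := asVm α β ρl ρr (μ (β (β a)) (α (β a))) (φ (φ (ψ n))) (α (α (α a))) with ht
      have h4 : (3 : K) • t = 0 := by
        rw [show (3 : K) = 1 + 1 + 1 by norm_num, add_smul, add_smul, one_smul]
        exact h3
      rcases smul_eq_zero.mp h4 with h | h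
      · exact absurd h (by norm_num)
      · exact h
    have hρr_add : ∀ (v w : V) (x : A), ρr (v + w) x = ρr v x + ρr w x :=
      fun v w x => (hρr.2 x).map_add v w
    have hρl_add : ∀ (x : A) (v w : V), ρl x (v + w) = ρl x v + ρl x w :=
      fun x v w => (hρl.1 x).map_add v w
    have hφ_add : ∀ v w : V, φ (v + w) = φ v + φ w := hφ.map_add
    simp only [biHomAssoc, asVr, asVl, asVm, Prod.mk_sub_mk, Prod.mk.injEq, Prod.mk_eq_zero] at key hn ⊢
    constructor
    · have := hJid a b
      simpa [biHomAssoc] using this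
    · simp only [hρr_add, hρl_add, hφ_add, hαβ, hφψ, hαμ, hβμ, hφρl, hψρl, hφρr, hψρr,
        hw] at key hn ⊢
      linear_combination (norm := abel) key + hn
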